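/- Consider the dual-rail min CRN with reactions (1) X₁⁻ → X₂⁺ + Y⁻, (2) X₂⁻ → X₁⁺ + Y⁻, (3) X₁⁺ + X₂⁺ → Y⁺. From an initial state with concentrations x₁⁺, x₁⁻, x₂⁺, x₂⁻ and zero Y⁺, Y⁻, there is a line-segment reachable static state with y⁺ − y⁻ = min(x₁⁺ − x₁⁻, x₂⁺ − x₂⁻). -/

import Mathlib

/-!
First run reactions (1) and (2) to completion: this moves each negative rail `xᵢ⁻` onto the
other input's positive rail and onto `Y⁻`, giving `(x₁⁺ + x₂⁻, 0, x₂⁺ + x₁⁻, 0, 0, x₁⁻ + x₂⁻)`.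
Then run reaction (3) with flux `t = min (x₁⁺ + x₂⁻) (x₂⁺ + x₁⁻)`, which empties one of the
positive rails, so no reaction is applicable any more, and
`y⁺ - y⁻ = t - (x₁⁻ + x₂⁻) = min (x₁⁺ - x₁⁻) (x₂⁺ - x₂⁻)`.
-/

/-- A chemical reaction network: reactant and product stoichiometries per reaction. -/
structure CRN (S R : Type) where
  reactants : R → S → ℕ
  products : R → S → ℕ

namespace CRN

variable {S R : Type} [Fintype S] [Fintype R]

/-- Net change of species `s` by one unit of reaction `r`. -/
def net (C : CRN S R) (r : R) (s : S) : ℝ :=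
  (C.products r s : ℝ) - (C.reactants r s : ℝ)

/-- A flux vector `u` is applicable at state `a` if it is nonnegative and every
reaction with positive flux has all its reactants positive in `a`. -/
def Applicable (C : CRN S R) (u : R → ℝ) (a : S → ℝ) : Prop :=
  (∀ r, 0 ≤ u r) ∧ ∀ r, 0 < u r → ∀ s, 0 < C.reactants r s → 0 < a s

/-- Straight-line reachability via a given flux vector: `b = M u + a`,
with `u` applicable at `a` and `b` a valid (nonnegative) state. -/
def StepWith (C : CRN S R) (u : R → ℝ) (a b : S → ℝ) : Prop :=
  C.Applicable u a ∧ (∀ s, 0 ≤ b s) ∧ ∀ s, b s = a s + ∑ r, u r * C.net r s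

/-- Straight-line reachability. -/
def Step (C : CRN S R) (a b : S → ℝ) : Prop := ∃ u, C.StepWith u a b

/-- Line-segment reachability: reflexive transitive closure of straight-line steps. -/
def Reach (C : CRN S R) : (S → ℝ) → (S → ℝ) → Prop := Relation.ReflTransGen C.Step

/-- A state is static if only the zero flux vector is applicable at it. -/
def Static (C : CRN S R) (b : S → ℝ) : Prop :=
  ∀ u, C.Applicable u b → u = 0

/-- Non-competitive: every species strictly decreased by some reaction is a
reactant in only that reaction. -/
def NonCompetitive (C : CRN S R) : Prop :=
  ∀ r s, C.products r s < C.reactants r s → ∀ r', 0 < C.reactants r' s → r' = r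

/-- A finite line-segment path of length `n`. -/
structure FinPath (C : CRN S R) (n : ℕ) where
  states : Fin (n+1) → S → ℝ
  flux : Fin n → R → ℝ
  valid : ∀ i : Fin n, C.StepWith (flux i) (states i.castSucc) (states i.succ)

end CRN

namespace CRN

theorem step_of_applicable {S R : Type} [Fintype S] [Fintype R] {C : CRN S R} {u : R → ℝ}
    {a : S → ℝ} (hu : C.Applicable u a) (hb : ∀ s, 0 ≤ a s + ∑ r, u r * C.net r s) :
    C.Step a (fun s => a s + ∑ r, u r * C.net r s) :=
  ⟨u, hu, hb, fun _ => rfl⟩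

theorem static_of_forall_exists_reactant_nonpos {S R : Type} {C : CRN S R} {b : S → ℝ}
    (h : ∀ r, ∃ s, 0 < C.reactants r s ∧ b s ≤ 0) : C.Static b := by
  intro u ⟨hnn, happ⟩
  funext r
  obtain ⟨s, hs, hbs⟩ := h r
  by_contra hr
  exact (happ r ((hnn r).lt_of_ne' hr) s hs).not_ge hbs

end CRN

/-- Species `X₁⁺, X₁⁻, X₂⁺, X₂⁻, Y⁺, Y⁻` are `0, …, 5`; reactions (1)–(3) are `0, 1, 2`. -/
def dualRailMinCRN : CRN (Fin 6) (Fin 3) :=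
  ⟨![![0, 1, 0, 0, 0, 0], ![0, 0, 0, 1, 0, 0], ![1, 0, 1, 0, 0, 0]],
    ![![0, 0, 1, 0, 0, 1], ![1, 0, 0, 0, 0, 1], ![0, 0, 0, 0, 1, 0]]⟩

namespace dualRailMinCRN

theorem sum_net (u : Fin 3 → ℝ) :
    (fun s => ∑ r, u r * dualRailMinCRN.net r s) =
      ![u 1 - u 2, -u 0, u 0 - u 2, -u 1, u 2, u 0 + u 1] := by
  funext s
  fin_cases s <;> simp [dualRailMinCRN, CRN.net, Fin.sum_univ_three] <;> ring

theorem applicable_iff (u : Fin 3 → ℝ) (a : Fin 6 → ℝ) :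
    dualRailMinCRN.Applicable u a ↔ 0 ≤ u ∧ (0 < u 0 → 0 < a 1) ∧ (0 < u 1 → 0 < a 3) ∧
      (0 < u 2 → 0 < a 0 ∧ 0 < a 2) := by
  simp [CRN.Applicable, Pi.le_def, Fin.forall_fin_succ, dualRailMinCRN]

theorem step {u : Fin 3 → ℝ} {a b : Fin 6 → ℝ} (hu : dualRailMinCRN.Applicable u a)
    (hb : 0 ≤ b) (hab : b = a + ![u 1 - u 2, -u 0, u 0 - u 2, -u 1, u 2, u 0 + u 1]) :
    dualRailMinCRN.Step a b := by
  rw [hab, ← sum_net] at hb ⊢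
  exact CRN.step_of_applicable hu hb

theorem static {b : Fin 6 → ℝ} (h1 : b 1 = 0) (h3 : b 3 = 0) (h02 : b 0 = 0 ∨ b 2 = 0) :
    dualRailMinCRN.Static b := by
  refine CRN.static_of_forall_exists_reactant_nonpos fun r => ?_
  fin_cases r
  · exact ⟨1, by simp [dualRailMinCRN], h1.le⟩
  · exact ⟨3, by simp [dualRailMinCRN], h3.le⟩
  · rcases h02 with h | h
    · exact ⟨0, by simp [dualRailMinCRN], h.le⟩
    · exact ⟨2, by simp [dualRailMinCRN], h.le⟩

end dualRailMinCRN

/-- The dual-rail min CRN: species `X₁⁺, X₁⁻, X₂⁺, X₂⁻, Y⁺, Y⁻` (indices 0..5),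
reactions `X₁⁻ → X₂⁺ + Y⁻`, `X₂⁻ → X₁⁺ + Y⁻`, `X₁⁺ + X₂⁺ → Y⁺`.
From `(x₁⁺, x₁⁻, x₂⁺, x₂⁻, 0, 0)` there is a line-segment reachable static
state with `y⁺ - y⁻ = min (x₁⁺ - x₁⁻) (x₂⁺ - x₂⁻)`. -/
theorem stmt3 (x1p x1m x2p x2m : ℝ)
    (h1 : 0 ≤ x1p) (h2 : 0 ≤ x1m) (h3 : 0 ≤ x2p) (h4 : 0 ≤ x2m) :
    let C : CRN (Fin 6) (Fin 3) :=
      ⟨![![0, 1, 0, 0, 0, 0], ![0, 0, 0, 1, 0, 0], ![1, 0, 1, 0, 0, 0]],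
        ![![0, 0, 1, 0, 0, 1], ![1, 0, 0, 0, 0, 1], ![0, 0, 0, 0, 1, 0]]⟩
    let a : Fin 6 → ℝ := ![x1p, x1m, x2p, x2m, 0, 0]
    ∃ b, C.Reach a b ∧ C.Static b ∧ b 4 - b 5 = min (x1p - x1m) (x2p - x2m) := by
  intro _ a
  set t := min (x1p + x2m) (x2p + x1m)
  have ht : 0 ≤ t := le_min (by linarith) (by linarith)
  have ht1 : t ≤ x1p + x2m := min_le_left _ _
  have ht2 : t ≤ x2p + x1m := min_le_right _ _
  have hmid : dualRailMinCRN.Step a ![x1p + x2m, 0, x2p + x1m, 0, 0, x1m + x2m] := by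
    refine dualRailMinCRN.step (u := ![x1m, x2m, 0]) ?_ ?_ ?_
    · simp [dualRailMinCRN.applicable_iff, a, Pi.le_def, Fin.forall_fin_succ, h2, h4]
    · intro s; fin_cases s <;> simp <;> linarith
    · funext s; fin_cases s <;> simp [a]
  have hend : dualRailMinCRN.Step ![x1p + x2m, 0, x2p + x1m, 0, 0, x1m + x2m]
      ![x1p + x2m - t, 0, x2p + x1m - t, 0, t, x1m + x2m] := by
    refine dualRailMinCRN.step (u := ![0, 0, t]) ?_ ?_ ?_
    · exact (dualRailMinCRN.applicable_iff _ _).2 ⟨fun r => by fin_cases r <;> simp [ht],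
        by simp, by simp, fun h => ⟨h.trans_le ht1, h.trans_le ht2⟩⟩
    · intro s; fin_cases s <;> simp <;> linarith
    · funext s; fin_cases s <;> simp <;> ring
  refine ⟨_, .head hmid (.single hend), dualRailMinCRN.static rfl rfl ?_, ?_⟩
  · show x1p + x2m - t = 0 ∨ x2p + x1m - t = 0
    exact (min_choice _ _).imp (fun h => sub_eq_zero.2 h.symm) (fun h => sub_eq_zero.2 h.symm)
  · show t - (x1m + x2m) = _
    rw [← min_sub_sub_right]
    congr 1 <;> ring
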